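/- Let (R,m) be a two-dimensional Noetherian local ring, I = (a,b) an m-primary ideal generated by two elements, and J an m-primary ideal. Then for all n ≥ 1: ℓ(R/(Jⁿ : (aⁿ,bⁿ))) ≤ ℓ(R/(aⁿ,bⁿ)) + 2·ℓ(R/Jⁿ) − ℓ(R/(IⁿJⁿ)). -/

import Mathlib

/-- The composition length of an `R`-module `M`, as a real number
(the Krull dimension of its submodule lattice; junk value `0` if infinite). -/
noncomputable def rlen (R : Type*) [Ring R] (M : Type*) [AddCommGroup M] [Module R M] : ℝ :=
  (((WithBot.unbotD 0 (Order.krullDim (Submodule R M)))).toNat : ℝ)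

/-!
Reducing the Koszul complex of `(aⁿ, bⁿ)` modulo `Jⁿ` gives a complex
`0 → R/(Jⁿ : (aⁿ,bⁿ)) → R/Jⁿ ⊕ R/Jⁿ → (aⁿ,bⁿ)/(aⁿ,bⁿ)Jⁿ → 0`, exact at both ends. Hence
`ℓ(R/(Jⁿ : (aⁿ,bⁿ))) + ℓ((aⁿ,bⁿ)/(aⁿ,bⁿ)Jⁿ) ≤ 2ℓ(R/Jⁿ)`, and
`ℓ((aⁿ,bⁿ)/(aⁿ,bⁿ)Jⁿ) = ℓ(R/(aⁿ,bⁿ)Jⁿ) - ℓ(R/(aⁿ,bⁿ)) ≥ ℓ(R/IⁿJⁿ) - ℓ(R/(aⁿ,bⁿ))`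
because `(aⁿ,bⁿ)Jⁿ ⊆ IⁿJⁿ`. All lengths on the right are finite since `(aⁿ,bⁿ)` and `Jⁿ` are
`m`-primary, which is what allows the subtraction.
-/

open IsLocalRing

lemma rlen_eq_toNat_length (R : Type*) [Ring R] (M : Type*) [AddCommGroup M] [Module R M] :
    rlen R M = (Module.length R M).toNat := by
  rw [rlen, ← Module.coe_length, WithBot.unbotD_coe]

lemma ENat.toNat_le_toNat_add_sub {x c s t : ℕ∞} (h : x + c ≤ s + t) (hs : s ≠ ⊤)
    (ht : t ≠ ⊤) : (x.toNat : ℝ) ≤ s.toNat + t.toNat - c.toNat := by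
  have hxc : x + c ≠ ⊤ := ne_top_of_le_ne_top (WithTop.add_ne_top.mpr ⟨hs, ht⟩) h
  have := ENat.toNat_le_toNat h (WithTop.add_ne_top.mpr ⟨hs, ht⟩)
  rw [ENat.toNat_add (ne_top_of_le_ne_top hxc le_self_add) (ne_top_of_le_ne_top hxc le_add_self),
    ENat.toNat_add hs ht] at this
  have : (x.toNat : ℝ) + c.toNat ≤ s.toNat + t.toNat := by exact_mod_cast this
  linarith

lemma Module.length_add_length_range_le {R A B C : Type*} [Ring R] [AddCommGroup A] [Module R A]
    [AddCommGroup B] [Module R B] [AddCommGroup C] [Module R C]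
    (φ : A →ₗ[R] B) (ψ : B →ₗ[R] C) (h : ψ ∘ₗ φ = 0) :
    Module.length R (LinearMap.range φ) + Module.length R (LinearMap.range ψ) ≤
      Module.length R B := by
  rw [Module.length_eq_add_of_exact _ _ (LinearMap.ker ψ).subtype_injective
    ψ.surjective_rangeRestrict
    (LinearMap.exact_iff.mpr (by rw [LinearMap.ker_rangeRestrict, Submodule.range_subtype]))]
  gcongr
  exact Module.length_le_of_injective (Submodule.inclusion (LinearMap.range_le_ker_iff.mpr h))
    (Submodule.inclusion_injective _)

lemma Submodule.length_quotient_eq_length_map_add {R M : Type*} [Ring R] [AddCommGroup M]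
    [Module R M] {N P : Submodule R M} (h : N ≤ P) :
    Module.length R (M ⧸ N) = Module.length R (P.map N.mkQ) + Module.length R (M ⧸ P) := by
  rw [Module.length_eq_add_of_exact _ _ (P.map N.mkQ).subtype_injective (mkQ_surjective _)
    (LinearMap.exact_subtype_mkQ _), (quotientQuotientEquivQuotient N P h).length_eq]

namespace Ideal

variable {R : Type*} [CommRing R]

lemma length_quotient_le_of_le {𝔞 𝔟 : Ideal R} (h : 𝔞 ≤ 𝔟) :
    Module.length R (R ⧸ 𝔟) ≤ Module.length R (R ⧸ 𝔞) :=
  Module.length_le_of_surjective (Submodule.factor h) (Submodule.factor_surjective h)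

lemma span_pair_pow_le (a b : R) (n : ℕ) : span {a ^ n, b ^ n} ≤ span {a, b} ^ n := by
  refine span_le.mpr ?_
  rintro _ (rfl | rfl)
  exacts [pow_mem_pow (subset_span (by simp)) n, pow_mem_pow (subset_span (by simp)) n]

lemma radical_span_pair_pow (a b : R) {n : ℕ} (hn : 0 < n) :
    (span {a ^ n, b ^ n}).radical = (span {a, b}).radical := by
  refine le_antisymm (radical_mono ((span_pair_pow_le a b n).trans (pow_le_self hn.ne')))
    (radical_le_radical_iff.mpr (span_le.mpr ?_))
  rintro _ (rfl | rfl)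
  exacts [⟨n, subset_span (by simp)⟩, ⟨n, subset_span (by simp)⟩]

lemma length_quotient_ne_top_of_radical_eq [IsNoetherianRing R] [IsLocalRing R] {𝔞 : Ideal R}
    (h : 𝔞.radical = maximalIdeal R) : Module.length R (R ⧸ 𝔞) ≠ ⊤ := by
  have hmin : maximalIdeal R ∈ 𝔞.minimalPrimes := by
    rw [minimalPrimes_eq_subsingleton
      (isPrimary_of_isMaximal_radical (h ▸ maximalIdeal.isMaximal R)), h]
    rfl
  have := quotient_artinian_of_mem_minimalPrimes_of_isLocalRing 𝔞 hmin
  rw [Module.length_eq_of_surjective (R := R ⧸ 𝔞) Quotient.mk_surjective]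
  exact Module.length_ne_top

variable (x y : R) (J : Ideal R)

/-- The first Koszul differential of `(x, y)`, reduced modulo `J`. -/
noncomputable def koszulLeft : R →ₗ[R] (R ⧸ J) × (R ⧸ J) :=
  (J.mkQ ∘ₗ LinearMap.mulLeft R y).prod (-(J.mkQ ∘ₗ LinearMap.mulLeft R x))

/-- The second Koszul differential, with target `R ⧸ (x, y) J` rather than `R ⧸ J` so that its
image is `(x, y) / (x, y) J`. -/
noncomputable def koszulRight : (R ⧸ J) × (R ⧸ J) →ₗ[R] R ⧸ (span {x, y} * J) :=
  (J.mapQ _ (LinearMap.mulLeft R x) fun _ hr ↦ mul_mem_mul (subset_span (by simp)) hr).coprod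
    (J.mapQ _ (LinearMap.mulLeft R y) fun _ hr ↦ mul_mem_mul (subset_span (by simp)) hr)

lemma koszulLeft_apply (r : R) :
    koszulLeft x y J r = (Quotient.mk J (y * r), Quotient.mk J (-(x * r))) := by
  simp [koszulLeft]

lemma koszulRight_mk (r s : R) :
    koszulRight x y J (Quotient.mk J r, Quotient.mk J s) =
      Quotient.mk (span {x, y} * J) (x * r + y * s) := rfl

lemma ker_koszulLeft : LinearMap.ker (koszulLeft x y J) = J.colon (span {x, y}) := by
  ext r
  simp only [LinearMap.mem_ker, koszulLeft_apply, Prod.mk_eq_zero, Quotient.eq_zero_iff_mem,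
    neg_mem_iff, colon_span, Submodule.mem_colon, Set.forall_mem_insert, Set.mem_singleton_iff,
    forall_eq, smul_eq_mul, mul_comm r, and_comm]

lemma koszulRight_comp_koszulLeft : koszulRight x y J ∘ₗ koszulLeft x y J = 0 := by
  ext
  rw [LinearMap.comp_apply, koszulLeft_apply, koszulRight_mk, LinearMap.zero_apply,
    Quotient.eq_zero_iff_mem]
  ring_nf
  exact zero_mem _

lemma range_koszulRight :
    LinearMap.range (koszulRight x y J) = Submodule.map (span {x, y} * J).mkQ (span {x, y}) := by
  ext z
  constructor
  · rintro ⟨⟨r, s⟩, rfl⟩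
    obtain ⟨r, rfl⟩ := Quotient.mk_surjective r
    obtain ⟨s, rfl⟩ := Quotient.mk_surjective s
    exact ⟨_, mem_span_pair.mpr ⟨r, s, by ring⟩, (koszulRight_mk x y J r s).symm⟩
  · rintro ⟨_, hz, rfl⟩
    obtain ⟨r, s, rfl⟩ := mem_span_pair.mp hz
    exact ⟨(Quotient.mk J r, Quotient.mk J s),
      (koszulRight_mk x y J r s).trans (congrArg _ (by ring))⟩

lemma length_quotient_colon_add_length_le :
    Module.length R (R ⧸ J.colon (span {x, y})) + Module.length R (R ⧸ span {x, y} * J) ≤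
      Module.length R (R ⧸ span {x, y}) + 2 * Module.length R (R ⧸ J) := by
  have key := Module.length_add_length_range_le _ _ (koszulRight_comp_koszulLeft x y J)
  rw [← ker_koszulLeft, (koszulLeft x y J).quotKerEquivRange.length_eq,
    Submodule.length_quotient_eq_length_map_add (P := span {x, y}) mul_le_left,
    ← range_koszulRight, ← add_assoc, add_comm _ (2 * _), two_mul,
    ← Module.length_prod R (R ⧸ J) (R ⧸ J)]
  gcongr

end Ideal

theorem stmt_12_general (R : Type*) [CommRing R] [IsNoetherianRing R] [IsLocalRing R]
    (a b : R) (I : Ideal R) (hIab : I = Ideal.span {a, b})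
    (hI : I.radical = IsLocalRing.maximalIdeal R)
    (J : Ideal R) (hJ : J.radical = IsLocalRing.maximalIdeal R)
    (n : ℕ) (hn : 1 ≤ n) :
    rlen R (R ⧸ Submodule.colon (J ^ n) (Ideal.span {a ^ n, b ^ n})) ≤
      rlen R (R ⧸ Ideal.span {a ^ n, b ^ n}) + 2 * rlen R (R ⧸ J ^ n)
        - rlen R (R ⧸ (I ^ n * J ^ n)) := by
  have hA : Module.length R (R ⧸ Ideal.span {a ^ n, b ^ n}) ≠ ⊤ :=
    Ideal.length_quotient_ne_top_of_radical_eq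
      (by rw [Ideal.radical_span_pair_pow a b hn, ← hIab, hI])
  have hJn : Module.length R (R ⧸ J ^ n) ≠ ⊤ :=
    Ideal.length_quotient_ne_top_of_radical_eq
      (by rw [Ideal.radical_pow J (Nat.one_le_iff_ne_zero.mp hn), hJ])
  have hIJ : Module.length R (R ⧸ I ^ n * J ^ n) ≤
      Module.length R (R ⧸ Ideal.span {a ^ n, b ^ n} * J ^ n) :=
    Ideal.length_quotient_le_of_le (Ideal.mul_mono_left (hIab ▸ Ideal.span_pair_pow_le a b n))
  have key := (add_le_add_right hIJ _).trans
    (Ideal.length_quotient_colon_add_length_le (a ^ n) (b ^ n) (J ^ n))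
  have h2Jn : 2 * Module.length R (R ⧸ J ^ n) ≠ ⊤ := by
    rw [two_mul]; exact WithTop.add_ne_top.mpr ⟨hJn, hJn⟩
  have := ENat.toNat_le_toNat_add_sub key hA h2Jn
  simpa [rlen_eq_toNat_length, ENat.toNat_mul] using this

/-- length inequality
`ℓ(R/(Jⁿ : (aⁿ,bⁿ))) ≤ ℓ(R/(aⁿ,bⁿ)) + 2ℓ(R/Jⁿ) − ℓ(R/IⁿJⁿ)` in a
two-dimensional Noetherian local ring, where `I = (a,b)`. -/
theorem stmt_12 (R : Type*) [CommRing R] [IsNoetherianRing R] [IsLocalRing R]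
    (hdim : ringKrullDim R = 2)
    (a b : R) (I : Ideal R) (hIab : I = Ideal.span {a, b})
    (hI : I.radical = IsLocalRing.maximalIdeal R)
    (J : Ideal R) (hJ : J.radical = IsLocalRing.maximalIdeal R)
    (n : ℕ) (hn : 1 ≤ n) :
    rlen R (R ⧸ Submodule.colon (J ^ n) (Ideal.span {a ^ n, b ^ n})) ≤
      rlen R (R ⧸ Ideal.span {a ^ n, b ^ n}) + 2 * rlen R (R ⧸ J ^ n)
        - rlen R (R ⧸ (I ^ n * J ^ n)) :=
  stmt_12_general R a b I hIab hI J hJ n hn
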